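/- arXiv:2503.21028 — 2 statements merged into one kernel-verified Lean document; each statement's English description precedes it below -/
import Mathlib

section
/- Let K be a real algebraic number field of degree d with embeddings σ_1 = id, σ_2, ..., σ_d into ℂ. Then every element β of E_K := {β ∈ Z_K : β > 0 and |σ_j(β)| < 2 for all j ∈ {2, ..., d}} can be written as a difference θ' - θ of two elements θ, θ' ∈ ℘_K in infinitely many ways. -/
open IntermediateField

/-- The "identity" embedding of a real number field `K ⊆ ℝ` into `ℂ`. -/
noncomputable def iotaK (K : IntermediateField ℚ ℝ) : ↥K →+* ℂ :=
  Complex.ofRealHom.comp (algebraMap ↥K ℝ)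

/-- `℘_K`: the set of Pisot numbers `θ ∈ K` with `ℚ(θ) = K`. -/
def pisotGen (K : IntermediateField ℚ ℝ) : Set ↥K :=
  {θ | IsIntegral ℤ θ ∧ 1 < (θ : ℝ) ∧
    IntermediateField.adjoin ℚ ({θ} : Set ↥K) = ⊤ ∧
    ∀ σ : ↥K →+* ℂ, σ ≠ iotaK K → ‖σ θ‖ < 1}

/-- `E_K`: the positive algebraic integers of `K` whose images under all embeddings of `K`
into `ℂ` other than the identity have modulus less than `2`. -/
def EK (K : IntermediateField ℚ ℝ) : Set ↥K :=
  {β | IsIntegral ℤ β ∧ 0 < (β : ℝ) ∧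
    ∀ σ : ↥K →+* ℂ, σ ≠ iotaK K → ‖σ β‖ < 2}

/-!
Dirichlet's unit theorem gives a unit `t` of `K` that is `> 1` at the identity place and `< 1` at
every other place, so its powers blow up at the identity and become arbitrarily small elsewhere.
Rounding coordinates in an integral basis approximates any `γ ∈ K` by an algebraic integer up to a
bounded error at each place; applying this to `γ / tᵏ` and multiplying back by `tᵏ` makes the error
as small as we like away from the identity. So there is an algebraic integer `θ₀` whose conjugates
are within `ε` of those of `-β/2`, and for large `k` the number `θ = θ₀ + t²ᵏ` is arbitrarily large
while the conjugates of `θ` and `θ + β` have modulus `< |σ β|/2 + ε < 1`. Pisot numbers of this kind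
generate `K`, which yields infinitely many pairs `(θ + β, θ)`.
-/

open NumberField NumberField.InfinitePlace Filter Topology

namespace NumberField.InfinitePlace

variable {K : Type*} [Field K] [NumberField K]

theorem exists_one_lt_and_lt_one (w₀ : InfinitePlace K) :
    ∃ t : 𝓞 K, 1 < w₀ t ∧ ∀ w ≠ w₀, w t < 1 := by
  by_cases h : ∀ w, w = w₀
  · refine ⟨2, ?_, fun w hw => (hw (h w)).elim⟩
    rw [show ((2 : 𝓞 K) : K) = ((2 : ℕ) : K) by norm_cast, w₀.map_natCast]
    norm_num
  push Not at h
  classical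
  obtain ⟨w₁, hw₁⟩ := h
  obtain ⟨u, hu⟩ := Units.dirichletUnitTheorem.exists_unit K w₀
  refine ⟨u, ?_, fun w hw => (Real.log_neg_iff (Units.pos_at_place u w)).1 (hu w hw)⟩
  -- the product formula `∑ mult w * log (w u) = 0` forces `log (w₀ u) > 0`
  have hsum := Units.sum_mult_mul_log u
  rw [← Finset.add_sum_erase _ _ (Finset.mem_univ w₀)] at hsum
  have hrest : ∑ w ∈ Finset.univ.erase w₀, (w.mult : ℝ) * Real.log (w u) < 0 :=
    Finset.sum_neg (fun w hw => mul_neg_of_pos_of_neg (by exact_mod_cast mult_pos)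
      (hu w (Finset.ne_of_mem_erase hw))) ⟨w₁, Finset.mem_erase.2 ⟨hw₁, Finset.mem_univ _⟩⟩
  have hlog : 0 < Real.log (w₀ u) :=
    pos_of_mul_pos_right (a := (w₀.mult : ℝ)) (by linarith) (by positivity)
  exact (Real.log_pos_iff (Units.pos_at_place u w₀).le).1 hlog

theorem exists_ringOfIntegers_sub_le :
    ∃ C : InfinitePlace K → ℝ, ∀ γ : K, ∃ z : 𝓞 K, ∀ w, w (z - γ) ≤ C w := by
  set b := integralBasis K
  refine ⟨fun w => ∑ i, w (b i), fun γ => ?_⟩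
  set r := b.repr γ
  refine ⟨∑ i, round (r i) • RingOfIntegers.basis K i, fun w => ?_⟩
  have hdiff : ((∑ i, round (r i) • RingOfIntegers.basis K i : 𝓞 K) : K) - γ
      = ∑ i, ((round (r i) - r i : ℚ) : K) * b i := by
    conv_lhs => rw [← b.sum_repr γ]
    simp only [map_sum, integralBasis_apply, b, Algebra.smul_def, ← Finset.sum_sub_distrib]
    refine Finset.sum_congr rfl fun i _ => ?_
    simp [sub_mul, r, b]
  rw [hdiff, coe_apply]
  refine (w.1.sum_le _ _).trans (Finset.sum_le_sum fun i _ => ?_)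
  rw [map_mul, ← coe_apply, ← coe_apply]
  refine mul_le_of_le_one_left (apply_nonneg w _) ?_
  rw [w.map_ratCast, ← Rat.norm_cast_real, Real.norm_eq_abs, ← Rat.cast_abs, abs_sub_comm]
  exact_mod_cast (abs_sub_round (r i)).trans (by norm_num)

theorem exists_ringOfIntegers_sub_lt (w₀ : InfinitePlace K) (γ : K) {ε : ℝ} (hε : 0 < ε) :
    ∃ θ : 𝓞 K, ∀ w ≠ w₀, w (θ - γ) < ε := by
  obtain ⟨t, ht₀, ht⟩ := exists_one_lt_and_lt_one w₀
  obtain ⟨C, hC⟩ := exists_ringOfIntegers_sub_le (K := K)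
  have hsmall : ∀ᶠ k in atTop, ∀ w ≠ w₀, w ((t : K) ^ k) * C w < ε :=
    eventually_all.2 fun w => eventually_imp_distrib_left.2 fun hw => by
      simp only [map_pow]
      refine Tendsto.eventually_lt_const ?_
        ((tendsto_pow_atTop_nhds_zero_of_lt_one (apply_nonneg w _) (ht w hw)).mul_const (C w))
      simpa using hε
  obtain ⟨k, hk⟩ := hsmall.exists
  have ha : (t : K) ^ k ≠ 0 := pow_ne_zero _ fun h => by simp [h] at ht₀; linarith
  obtain ⟨z, hz⟩ := hC (γ / (t : K) ^ k)
  refine ⟨t ^ k * z, fun w hw => ?_⟩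
  calc w (((t ^ k * z : 𝓞 K) : K) - γ) = w ((t : K) ^ k) * w (z - γ / (t : K) ^ k) := by
        rw [← map_mul, mul_sub, mul_div_cancel₀ _ ha]; push_cast; rfl
  _ ≤ w ((t : K) ^ k) * C w := mul_le_mul_of_nonneg_left (hz w) (apply_nonneg _ _)
  _ < ε := hk w hw

end NumberField.InfinitePlace

theorem exists_pos_forall_add_lt {ι : Type*} [Finite ι] {f : ι → ℝ} {c : ℝ}
    (h : ∀ i, f i < c) : ∃ ε > 0, ∀ i, f i + ε < c := by
  have : ∀ᶠ ε in 𝓝[>] (0 : ℝ), ∀ i, f i + ε < c := eventually_all.2 fun i =>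
    nhdsWithin_le_nhds <| (tendsto_const_nhds.add tendsto_id).eventually_lt_const
      (by simpa using h i)
  obtain ⟨ε, hε, hpos⟩ := (this.and self_mem_nhdsWithin).exists
  exact ⟨ε, hpos, hε⟩

theorem norm_lt_and_norm_add_two_nsmul_lt {E : Type*} [SeminormedAddCommGroup E] {x y : E}
    {ε c : ℝ} (hx : ‖x + y‖ < ε) (hy : ‖y‖ + ε < c) : ‖x‖ < c ∧ ‖x + 2 • y‖ < c := by
  constructor
  · calc ‖x‖ = ‖(x + y) - y‖ := by rw [add_sub_cancel_right]
    _ ≤ ‖x + y‖ + ‖y‖ := norm_sub_le _ _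
    _ < c := by linarith
  · calc ‖x + 2 • y‖ = ‖(x + y) + y‖ := by rw [two_nsmul, add_assoc]
    _ ≤ ‖x + y‖ + ‖y‖ := norm_add_le _ _
    _ < c := by linarith

section RealSubfield

theorem iotaK_isReal (K : IntermediateField ℚ ℝ) : ComplexEmbedding.IsReal (iotaK K) := by
  rw [ComplexEmbedding.isReal_iff]
  ext x
  simp [ComplexEmbedding.conjugate, iotaK]

theorem mk_ne_mk_iotaK {K : IntermediateField ℚ ℝ} {σ : K →+* ℂ} (hσ : σ ≠ iotaK K) :
    mk σ ≠ mk (iotaK K) := fun h => hσ <| by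
  have hσ_real : ComplexEmbedding.IsReal σ :=
    isReal_mk_iff.1 (h ▸ isReal_mk_iff.2 (iotaK_isReal K))
  rw [← embedding_mk_eq_of_isReal hσ_real, h, embedding_mk_eq_of_isReal (iotaK_isReal K)]

variable (K : IntermediateField ℚ ℝ) [FiniteDimensional ℚ K]

instance numberField_of_finiteDimensional : NumberField K := ⟨⟩

theorem exists_isIntegral_one_lt_and_norm_lt_one :
    ∃ s : K, IsIntegral ℤ s ∧ 1 < (s : ℝ) ∧ ∀ σ ≠ iotaK K, ‖σ s‖ < 1 := by
  obtain ⟨t, ht₀, ht⟩ := exists_one_lt_and_lt_one (mk (iotaK K))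
  refine ⟨t ^ 2, (RingOfIntegers.isIntegral_coe t).pow 2, ?_, fun σ hσ => ?_⟩
  · rw [apply] at ht₀
    simpa [iotaK] using ht₀
  · rw [map_pow, norm_pow]
    exact pow_lt_one₀ (norm_nonneg _) (ht _ (mk_ne_mk_iotaK hσ)) two_ne_zero

theorem exists_isIntegral_gt_and_norm_sub_lt (γ : K) {ε : ℝ} (hε : 0 < ε) (M : ℝ) :
    ∃ θ : K, IsIntegral ℤ θ ∧ M < (θ : ℝ) ∧ ∀ σ ≠ iotaK K, ‖σ θ - σ γ‖ < ε := by
  obtain ⟨s, hs, hs1, hsσ⟩ := exists_isIntegral_one_lt_and_norm_lt_one K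
  obtain ⟨θ₀, hθ₀⟩ := exists_ringOfIntegers_sub_lt (mk (iotaK K)) γ (half_pos hε)
  have hlarge : ∀ᶠ k in atTop, M - (θ₀ : K) < (s : ℝ) ^ k :=
    (tendsto_pow_atTop_atTop_of_one_lt hs1).eventually_gt_atTop _
  have hsmall : ∀ᶠ k in atTop, ∀ σ ≠ iotaK K, ‖σ s‖ ^ k < ε / 2 :=
    eventually_all.2 fun σ => eventually_imp_distrib_left.2 fun hσ =>
      (tendsto_pow_atTop_nhds_zero_of_lt_one (norm_nonneg _) (hsσ σ hσ)).eventually_lt_const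
        (half_pos hε)
  obtain ⟨k, hkM, hkε⟩ := (hlarge.and hsmall).exists
  refine ⟨θ₀ + s ^ k, (RingOfIntegers.isIntegral_coe θ₀).add (hs.pow k), ?_, fun σ hσ => ?_⟩
  · push_cast
    linarith
  calc ‖σ (θ₀ + s ^ k) - σ γ‖ = ‖(σ θ₀ - σ γ) + σ s ^ k‖ := by rw [map_add, map_pow]; ring_nf
  _ ≤ ‖σ θ₀ - σ γ‖ + ‖σ s‖ ^ k := (norm_add_le _ _).trans_eq (by rw [norm_pow])
  _ < ε / 2 + ε / 2 := by
      refine add_lt_add ?_ (hkε σ hσ)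
      simpa [apply] using hθ₀ (mk σ) (mk_ne_mk_iotaK hσ)
  _ = ε := add_halves ε

theorem mem_pisotGen_of {θ : K} (hθ : IsIntegral ℤ θ) (h1 : 1 < (θ : ℝ))
    (hσ : ∀ σ ≠ iotaK K, ‖σ θ‖ < 1) : θ ∈ pisotGen K := by
  refine ⟨hθ, h1, ?_, hσ⟩
  set x : 𝓞 K := ⟨θ, hθ⟩
  have hne : x ≠ 0 := RingOfIntegers.coe_ne_zero_iff.1 fun h => by
    rw [show θ = 0 from h] at h1
    norm_num at h1
  have hlt : ∀ ⦃w⦄, w ≠ mk (iotaK K) → w (x : K) < 1 := fun w hw => by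
    rw [← mk_embedding w] at hw ⊢
    exact hσ _ fun h => hw (by rw [h])
  -- elaborating this term directly against the goal times out in unification
  have := is_primitive_element_of_infinitePlace_lt hne hlt
    (Or.inl (isReal_mk_iff.2 (iotaK_isReal K)))
  exact this

end RealSubfield

/-- Every element `β` of `E_K` can be written as a difference `θ' - θ` of two elements of
`℘_K` in infinitely many ways. -/
theorem EK_diff_infinitely_many_ways (K : IntermediateField ℚ ℝ) [FiniteDimensional ℚ K]
    (β : ↥K) (hβ : β ∈ EK K) :
    {p : ↥K × ↥K | p.1 ∈ pisotGen K ∧ p.2 ∈ pisotGen K ∧ p.1 - p.2 = β}.Infinite := by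
  obtain ⟨hβ_int, hβ_pos, hβ_conj⟩ := hβ
  have hhalf : ∀ σ : {σ : K →+* ℂ // σ ≠ iotaK K}, ‖σ.1 (β / 2)‖ < 1 := fun ⟨σ, hσ⟩ => by
    rw [map_div₀, map_ofNat, norm_div, Complex.norm_two]
    linarith [hβ_conj σ hσ]
  obtain ⟨ε, hε, hεβ⟩ := exists_pos_forall_add_lt hhalf
  refine Set.Infinite.of_image (fun p => ((p.2 : K) : ℝ)) (Set.infinite_of_not_bddAbove ?_)
  rw [not_bddAbove_iff]
  intro M
  obtain ⟨θ, hθ, hMθ, hθσ⟩ := exists_isIntegral_gt_and_norm_sub_lt K (-(β / 2)) hε (max M 1)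
  have hconj (σ : K →+* ℂ) (hσ : σ ≠ iotaK K) : ‖σ θ‖ < 1 ∧ ‖σ (θ + β)‖ < 1 := by
    have key := norm_lt_and_norm_add_two_nsmul_lt (x := σ θ)
      (by simpa [sub_eq_add_neg] using hθσ σ hσ) (hεβ ⟨σ, hσ⟩)
    rwa [two_nsmul, ← map_add, add_halves, ← map_add] at key
  have hθ1 : 1 < (θ : ℝ) := (le_max_right M 1).trans_lt hMθ
  refine ⟨θ, ⟨(θ + β, θ), ⟨?_, mem_pisotGen_of K hθ hθ1 fun σ hσ => (hconj σ hσ).1,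
    add_sub_cancel_left θ β⟩, rfl⟩, (le_max_left M 1).trans_lt hMθ⟩
  refine mem_pisotGen_of K (hθ.add hβ_int) ?_ fun σ hσ => (hconj σ hσ).2
  push_cast
  linarith
end

section
/- Let K be a real algebraic number field of degree d = s + 2t, where s is the number of real embeddings and 2t the number of non-real embeddings of K into ℂ. Let θ_1 < θ_2 < θ_3 < ... be the elements of ℘_K listed in increasing order, and let C_K := {θ_{n+1} - θ_n : n ∈ ℕ} be the set of positive differences of consecutive elements of ℘_K. Then C_K has at least 2^{s+t-1} elements. -/
open IntermediateField

/-- `C_K`: the set of differences of consecutive elements of `℘_K`, i.e. differences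
`θ' - θ` of elements `θ < θ'` of `℘_K` with no element of `℘_K` strictly between them. -/
def CK (K : IntermediateField ℚ ℝ) : Set ↥K :=
  {c | ∃ θ ∈ pisotGen K, ∃ θ' ∈ pisotGen K, (θ : ℝ) < (θ' : ℝ) ∧ c = θ' - θ ∧
    ∀ η ∈ pisotGen K, ¬((θ : ℝ) < (η : ℝ) ∧ (η : ℝ) < (θ' : ℝ))}

/-!
Write `w₀` for the place of `K` given by the inclusion `K ⊆ ℝ`. The lattice `𝓞 K` has bounded
covering radius in the mixed space, and Dirichlet's unit theorem provides units that are as small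
as we like at every place `w ≠ w₀`; multiplying by such a unit shows that algebraic integers
approximate any prescribed conjugates at the places `w ≠ w₀` to any precision `ρ`, with an error
at `w₀` bounded in terms of `ρ` only. Such an integer with conjugates off `w₀` in the unit disc and
large at `w₀` lies in `℘_K` (it is automatically a primitive element). Hence the gaps of `℘_K` are
bounded, and `C_K` is finite.

At each `w ≠ w₀` choose a unit direction `ω_w` (`ω_w = 1` at real places) such that no `σ_w(c)`,
`c ∈ C_K`, is orthogonal to it, and let `3ρ` be smaller than all these projections. For a sign
pattern `ε`, take `θ ∈ ℘_K` with `σ_w(θ)` within `ρ` of `ε_w (1 - 2ρ) ω_w` and let `θ'` be its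
successor in `℘_K`. As `|σ_w(θ')| < 1`, the projection of `σ_w(θ' - θ)` on `ω_w` is below `3ρ` if
`ε_w = 1` and above `-3ρ` if `ε_w = -1`, so its sign is `-ε_w`. Thus all `2^(s+t-1)` sign patterns
are realised by elements of `C_K`.
-/

open NumberField NumberField.InfinitePlace NumberField.mixedEmbedding ComplexConjugate Filter
  Topology

lemma Set.encard_univ_set_subtype_ne {α : Type*} [Fintype α] (a : α) :
    (Set.univ : Set (Set {x // x ≠ a})).encard = 2 ^ (Fintype.card α - 1) := by
  classical
  rw [Set.encard_univ, ENat.card_eq_coe_fintype_card, Fintype.card_set,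
    Fintype.card_subtype_compl, Fintype.card_subtype_eq]
  push_cast
  rfl

lemma sub_neg_iff_of_abs_sub_le {a b ρ : ℝ} {p : Prop} [Decidable p] (ha : |a| < 1)
    (hb : |b - if p then 1 - 2 * ρ else -(1 - 2 * ρ)| ≤ ρ) (hab : 3 * ρ < |a - b|) :
    a - b < 0 ↔ p := by
  rw [abs_lt] at ha
  rcases lt_abs.mp hab with hab | hab <;> by_cases hp : p <;>
    simp only [hp, if_true, if_false, abs_le] at hb <;> simp only [hp, iff_true, iff_false] <;>
    linarith

lemma Complex.exists_norm_eq_one_forall_re_conj_mul_ne_zero {S : Set ℂ} (hS : S.Finite)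
    (h0 : 0 ∉ S) : ∃ ω : ℂ, ‖ω‖ = 1 ∧ ∀ z ∈ S, (conj ω * z).re ≠ 0 := by
  -- `ω = (1 + t i) / ‖1 + t i‖` works unless `z.re + t * z.im = 0`, which excludes at most one
  -- `t` for each `z ≠ 0`.
  have hbad : (⋃ z ∈ S, {t : ℝ | z.re + t * z.im = 0}).Finite := by
    refine hS.biUnion fun z hz ↦ Set.Subsingleton.finite fun t ht s hs ↦ ?_
    simp only [Set.mem_ofPred_eq] at ht hs
    have him : z.im ≠ 0 := fun h ↦
      h0 ((Complex.ext (by simpa [h] using ht) (by simpa using h) : z = 0) ▸ hz)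
    exact mul_right_cancel₀ him (by linarith)
  obtain ⟨t, ht⟩ := hbad.infinite_compl.nonempty
  simp only [Set.mem_compl_iff, Set.mem_iUnion, Set.mem_ofPred_eq, not_exists] at ht
  have hv : ‖(1 + t * I : ℂ)‖ ≠ 0 := norm_ne_zero_iff.mpr fun h ↦ by simpa using congrArg re h
  refine ⟨(1 + t * I) / ‖(1 + t * I : ℂ)‖, ?_, fun z hz ↦ ?_⟩
  · rw [norm_div, Complex.norm_real, norm_norm, div_self hv]
  · have : (conj ((1 + t * I) / ‖(1 + t * I : ℂ)‖) * z).re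
        = (z.re + t * z.im) / ‖(1 + t * I : ℂ)‖ := by
      simp only [map_div₀, map_add, map_one, map_mul, conj_ofReal, conj_I, mul_neg, mul_re,
        div_ofReal_re, add_re, one_re, neg_re, ofReal_re, I_re, mul_zero, ofReal_im, I_im, mul_one,
        sub_self, neg_zero, add_zero, one_div, div_ofReal_im, add_im, one_im, neg_im, mul_im,
        zero_add]
      ring
    rw [this]
    exact div_ne_zero (ht z hz) hv

namespace NumberField

variable {F : Type*} [Field F]

lemma InfinitePlace.exists_norm_eq_one_forall_re_conj_mul_embedding_ne_zero
    (w : InfinitePlace F) {S : Set F} (hS : S.Finite) (h0 : 0 ∉ S) :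
    ∃ ω : ℂ, ‖ω‖ = 1 ∧ (w.IsReal → ω = 1) ∧ ∀ c ∈ S, (conj ω * w.embedding c).re ≠ 0 := by
  by_cases hw : w.IsReal
  · refine ⟨1, norm_one, fun _ ↦ rfl, fun c hc ↦ ?_⟩
    rw [map_one, one_mul, ← embedding_of_isReal_apply hw, Complex.ofReal_re]
    exact (map_ne_zero _).mpr (ne_of_mem_of_not_mem hc h0)
  · obtain ⟨ω, hω, hre⟩ := Complex.exists_norm_eq_one_forall_re_conj_mul_ne_zero
      (hS.image w.embedding) (by simpa using h0)
    exact ⟨ω, hω, fun h ↦ absurd h hw, fun c hc ↦ hre _ (Set.mem_image_of_mem _ hc)⟩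

variable [NumberField F]

lemma InfinitePlace.exists_unit_forall_ne_le (w₀ : InfinitePlace F) {ε : ℝ} (hε : 0 < ε) :
    ∃ u : (𝓞 F)ˣ, ∀ w ≠ w₀, w (u : F) ≤ ε := by
  obtain ⟨u, hu⟩ := Units.dirichletUnitTheorem.exists_unit F w₀
  have hpow : ∀ w, ∀ᶠ n : ℕ in atTop, w ≠ w₀ → w ((u ^ n : (𝓞 F)ˣ) : F) ≤ ε := by
    intro w
    by_cases hw : w = w₀
    · exact .of_forall fun _ h ↦ absurd hw h
    have hlt : w (u : F) < 1 := lt_of_not_ge fun h ↦ (Real.log_nonneg h).not_gt (hu w hw)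
    simp only [Units.val_pow_eq_pow_val, map_pow]
    filter_upwards [(tendsto_pow_atTop_nhds_zero_of_lt_one (apply_nonneg _ _) hlt).eventually
      (eventually_le_nhds hε)] with n hn _ using hn
  obtain ⟨n, hn⟩ := (eventually_all.mpr hpow).exists
  exact ⟨u ^ n, fun w hw ↦ hn w hw⟩

lemma mixedEmbedding.exists_forall_normAtPlace_sub_le :
    ∃ R > 0, ∀ x : mixedSpace F, ∃ a : 𝓞 F,
      ∀ w, normAtPlace w (mixedEmbedding F (a : F) - x) ≤ R := by
  classical
  refine ⟨∑ i, ‖latticeBasis F i‖ + 1, by positivity, fun x ↦ ?_⟩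
  obtain ⟨a, ha⟩ := (mem_span_latticeBasis F).mp (ZSpan.floor (latticeBasis F) x).2
  refine ⟨a, fun w ↦ ?_⟩
  have hfract : ‖x - mixedEmbedding F (a : F)‖ ≤ ∑ i, ‖latticeBasis F i‖ := by
    rw [show mixedEmbedding F (a : F) = ZSpan.floor (latticeBasis F) x from ha,
      ← ZSpan.fract_apply]
    exact ZSpan.norm_fract_le _ x
  calc normAtPlace w (mixedEmbedding F (a : F) - x)
      ≤ ‖x - mixedEmbedding F (a : F)‖ := by
        rw [← normAtPlace_neg, neg_sub, norm_eq_sup'_normAtPlace]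
        exact Finset.le_sup' (fun w ↦ normAtPlace w _) (Finset.mem_univ w)
    _ ≤ _ := by linarith

lemma mixedEmbedding.exists_forall_ne_normAtPlace_sub_le (w₀ : InfinitePlace F) {ρ : ℝ}
    (hρ : 0 < ρ) : ∃ D, ∀ x : mixedSpace F, ∃ a : 𝓞 F,
      (∀ w ≠ w₀, normAtPlace w (mixedEmbedding F (a : F) - x) ≤ ρ) ∧
      normAtPlace w₀ (mixedEmbedding F (a : F) - x) ≤ D := by
  obtain ⟨R, hR, hcover⟩ := exists_forall_normAtPlace_sub_le (F := F)
  obtain ⟨u, hu⟩ := InfinitePlace.exists_unit_forall_ne_le w₀ (div_pos hρ hR)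
  refine ⟨w₀ (u : F) * R, fun x ↦ ?_⟩
  obtain ⟨a, ha⟩ := hcover (mixedEmbedding F ((u⁻¹ : (𝓞 F)ˣ) : F) * x)
  have hscale : ∀ w, normAtPlace w (mixedEmbedding F ((u * a : 𝓞 F) : F) - x) ≤ w (u : F) * R := by
    intro w
    have hux : mixedEmbedding F (u : F) * mixedEmbedding F ((u⁻¹ : (𝓞 F)ˣ) : F) = 1 := by
      rw [← map_mul, ← map_mul (algebraMap (𝓞 F) F), Units.mul_inv, map_one, map_one]
    rw [show mixedEmbedding F ((u * a : 𝓞 F) : F) - x = mixedEmbedding F (u : F) *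
        (mixedEmbedding F (a : F) - mixedEmbedding F ((u⁻¹ : (𝓞 F)ˣ) : F) * x) by
      rw [mul_sub, ← mul_assoc, hux, one_mul, RingOfIntegers.coe_eq_algebraMap, map_mul,
        map_mul],
      map_mul, normAtPlace_apply]
    exact mul_le_mul_of_nonneg_left (ha w) (apply_nonneg _ _)
  refine ⟨u * a, fun w hw ↦ (hscale w).trans ?_, hscale w₀⟩
  calc w (u : F) * R ≤ ρ / R * R := by gcongr; exact hu w hw
    _ = ρ := div_mul_cancel₀ ρ hR.ne'

lemma InfinitePlace.exists_forall_ne_norm_embedding_sub_le (w₀ : InfinitePlace F) {ρ : ℝ}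
    (hρ : 0 < ρ) : ∃ D, ∀ z : InfinitePlace F → ℂ, (∀ w, w.IsReal → (z w).im = 0) →
      ∃ a : 𝓞 F, (∀ w ≠ w₀, ‖w.embedding a - z w‖ ≤ ρ) ∧ ‖w₀.embedding a - z w₀‖ ≤ D := by
  obtain ⟨D, hD⟩ := mixedEmbedding.exists_forall_ne_normAtPlace_sub_le w₀ hρ
  refine ⟨D, fun z hz ↦ ?_⟩
  let y : mixedSpace F := (fun w ↦ (z w.1).re, fun w ↦ z w.1)
  have hnorm : ∀ (x : F) w, normAtPlace w (mixedEmbedding F x - y) = ‖w.embedding x - z w‖ := by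
    intro x w
    rcases isReal_or_isComplex w with hw | hw
    · rw [normAtPlace_apply_of_isReal hw, Prod.fst_sub, Pi.sub_apply, mixedEmbedding_apply_isReal,
        ← Complex.norm_real, Complex.ofReal_sub, embedding_of_isReal_apply,
        show ((z w).re : ℂ) = z w from Complex.ext rfl (by simp [hz w hw])]
    · rw [normAtPlace_apply_of_isComplex hw, Prod.snd_sub, Pi.sub_apply,
        mixedEmbedding_apply_isComplex]
  obtain ⟨a, ha, ha₀⟩ := hD y
  exact ⟨a, fun w hw ↦ hnorm a w ▸ ha w hw, hnorm a w₀ ▸ ha₀⟩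

lemma InfinitePlace.finite_of_apply_le (r : ℝ) :
    {x : F | IsIntegral ℤ x ∧ ∀ w : InfinitePlace F, w x ≤ r}.Finite :=
  (Embeddings.finite_of_norm_le F ℂ r).subset fun _ ⟨hx, hw⟩ ↦ ⟨hx, fun φ ↦ hw (mk φ)⟩

end NumberField

section

variable (K : IntermediateField ℚ ℝ)

lemma iotaK_apply (x : K) : iotaK K x = (x : ℝ) := rfl

lemma isReal_iotaK : ComplexEmbedding.IsReal (iotaK K) := by
  ext x
  simp [ComplexEmbedding.conjugate_coe_eq, iotaK_apply]

noncomputable def iotaPlace : InfinitePlace K := InfinitePlace.mk (iotaK K)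

lemma embedding_iotaPlace : (iotaPlace K).embedding = iotaK K :=
  embedding_mk_eq_of_isReal (isReal_iotaK K)

lemma isReal_iotaPlace : (iotaPlace K).IsReal :=
  isReal_mk_iff.mpr (isReal_iotaK K)

lemma iotaPlace_apply (x : K) : iotaPlace K x = |(x : ℝ)| := by
  rw [iotaPlace, InfinitePlace.apply, iotaK_apply, Complex.norm_real, Real.norm_eq_abs]

variable {K} in
lemma mk_eq_iotaPlace_iff {σ : K →+* ℂ} : InfinitePlace.mk σ = iotaPlace K ↔ σ = iotaK K := by
  refine ⟨fun h ↦ ?_, fun h ↦ h ▸ rfl⟩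
  have hσ : ComplexEmbedding.IsReal σ := isReal_mk_iff.mp (h ▸ isReal_iotaPlace K)
  rw [← embedding_mk_eq_of_isReal hσ, h, embedding_iotaPlace]

lemma forall_ne_iotaK_iff (θ : K) :
    (∀ σ : K →+* ℂ, σ ≠ iotaK K → ‖σ θ‖ < 1) ↔ ∀ w ≠ iotaPlace K, w θ < 1 := by
  refine ⟨fun h w hw ↦ ?_, fun h σ hσ ↦ h _ (mt mk_eq_iotaPlace_iff.mp hσ)⟩
  rw [← norm_embedding_eq]
  exact h _ fun he ↦ hw (by rw [← mk_embedding w, he]; rfl)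

lemma pos_of_mem_CK {c : K} (hc : c ∈ CK K) : 0 < (c : ℝ) := by
  obtain ⟨θ, -, θ', -, hlt, rfl, -⟩ := hc
  push_cast
  linarith

end

section

variable (K : IntermediateField ℚ ℝ) [NumberField K]

lemma adjoin_eq_top_of_forall_ne_iotaK {θ : K} (h1 : 1 < (θ : ℝ))
    (h : ∀ σ : K →+* ℂ, σ ≠ iotaK K → ‖σ θ‖ < 1) : ℚ⟮θ⟯ = ⊤ := by
  rw [Field.primitive_element_iff_algHom_eq_of_eval ℚ ℂ (fun _ ↦ IsAlgClosed.splits _) θ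
    (iotaK K).toRatAlgHom]
  intro ψ hψ
  by_contra hne
  have hlt := h ψ.toRingHom fun he ↦ hne (by ext; simp [← he])
  rw [AlgHom.toRingHom_eq_coe, RingHom.coe_coe, ← hψ, RingHom.toRatAlgHom_apply, iotaK_apply,
    Complex.norm_real, Real.norm_eq_abs] at hlt
  exact absurd (h1.trans_le (le_abs_self _)) hlt.not_gt

lemma mem_pisotGen_iff {θ : K} :
    θ ∈ pisotGen K ↔ IsIntegral ℤ θ ∧ 1 < (θ : ℝ) ∧ ∀ w ≠ iotaPlace K, w θ < 1 := by
  rw [← forall_ne_iotaK_iff]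
  exact ⟨fun ⟨hi, h1, _, h⟩ ↦ ⟨hi, h1, h⟩,
    fun ⟨hi, h1, h⟩ ↦ ⟨hi, h1, adjoin_eq_top_of_forall_ne_iotaK K h1 h, h⟩⟩

lemma exists_mem_pisotGen_near {ρ : ℝ} (hρ : 0 < ρ) : ∃ D, ∀ (z : InfinitePlace K → ℂ) (T : ℝ),
    (∀ w, w.IsReal → (z w).im = 0) → (∀ w ≠ iotaPlace K, ‖z w‖ + ρ < 1) → D + 1 < T →
    ∃ θ ∈ pisotGen K, (∀ w ≠ iotaPlace K, ‖w.embedding θ - z w‖ ≤ ρ) ∧ |(θ : ℝ) - T| ≤ D := by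
  classical
  obtain ⟨D, hD⟩ := InfinitePlace.exists_forall_ne_norm_embedding_sub_le (iotaPlace K) hρ
  refine ⟨D, fun z T hz hsmall hT ↦ ?_⟩
  obtain ⟨a, ha, haT⟩ := hD (Function.update z (iotaPlace K) T) fun w hw ↦ by
    rcases eq_or_ne w (iotaPlace K) with rfl | hne
    · simp
    · simpa [hne] using hz w hw
  rw [Function.update_self, embedding_iotaPlace, iotaK_apply, ← Complex.ofReal_sub,
    Complex.norm_real, Real.norm_eq_abs] at haT
  have happrox : ∀ w ≠ iotaPlace K, ‖w.embedding a - z w‖ ≤ ρ := fun w hw ↦ by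
    simpa [hw] using ha w hw
  refine ⟨a, (mem_pisotGen_iff K).mpr ⟨RingOfIntegers.isIntegral_coe a, ?_, fun w hw ↦ ?_⟩,
    happrox, haT⟩
  · linarith [abs_le.mp haT]
  · rw [← norm_embedding_eq]
    linarith [norm_sub_norm_le (w.embedding a) (z w), happrox w hw, hsmall w hw]

lemma exists_mem_pisotGen_gt_le_add :
    ∃ B, ∀ θ ∈ pisotGen K, ∃ η ∈ pisotGen K, (θ : ℝ) < η ∧ (η : ℝ) ≤ θ + B := by
  obtain ⟨D, hD⟩ := exists_mem_pisotGen_near K one_half_pos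
  refine ⟨2 * D + 1, fun θ hθ ↦ ?_⟩
  have hθ1 := ((mem_pisotGen_iff K).mp hθ).2.1
  obtain ⟨η, hη, -, hηT⟩ := hD 0 (θ + D + 1) (by simp) (by norm_num) (by linarith)
  exact ⟨η, hη, by linarith [abs_le.mp hηT], by linarith [abs_le.mp hηT]⟩

lemma finite_pisotGen_le (M : ℝ) : {θ ∈ pisotGen K | (θ : ℝ) ≤ M}.Finite :=
  (InfinitePlace.finite_of_apply_le (max M 1)).subset fun θ ⟨hθ, hM⟩ ↦ by
    obtain ⟨hi, h1, hw⟩ := (mem_pisotGen_iff K).mp hθ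
    refine ⟨hi, fun w ↦ ?_⟩
    rcases eq_or_ne w (iotaPlace K) with rfl | hne
    · rw [iotaPlace_apply, abs_of_pos (by linarith)]
      exact le_max_of_le_left hM
    · exact le_max_of_le_right (hw w hne).le

lemma exists_sub_mem_CK {θ : K} (hθ : θ ∈ pisotGen K) : ∃ θ' ∈ pisotGen K, θ' - θ ∈ CK K := by
  obtain ⟨B, hB⟩ := exists_mem_pisotGen_gt_le_add K
  obtain ⟨η, hη, hθη, hηB⟩ := hB θ hθ
  obtain ⟨θ', ⟨⟨hθ', hθ'B⟩, hθθ'⟩, hmin⟩ := Set.exists_min_image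
    ({η ∈ pisotGen K | (η : ℝ) ≤ θ + B} ∩ {η | (θ : ℝ) < η}) (fun η ↦ (η : ℝ))
    ((finite_pisotGen_le K _).inter_of_left _) ⟨η, ⟨hη, hηB⟩, hθη⟩
  refine ⟨θ', hθ', θ, hθ, θ', hθ', hθθ', rfl, fun ζ hζ ⟨hθζ, hζθ'⟩ ↦ ?_⟩
  exact (hmin ζ ⟨⟨hζ, by linarith⟩, hθζ⟩).not_gt hζθ'

lemma exists_forall_mem_CK_le : ∃ B, ∀ c ∈ CK K, (c : ℝ) ≤ B := by
  obtain ⟨B, hB⟩ := exists_mem_pisotGen_gt_le_add K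
  refine ⟨B, ?_⟩
  rintro _ ⟨θ, hθ, θ', -, -, rfl, hcons⟩
  obtain ⟨η, hη, hθη, hηB⟩ := hB θ hθ
  have : (θ' : ℝ) ≤ η := le_of_not_gt fun h ↦ hcons η hη ⟨hθη, h⟩
  push_cast
  linarith

lemma finite_CK : (CK K).Finite := by
  obtain ⟨B, hB⟩ := exists_forall_mem_CK_le K
  refine (InfinitePlace.finite_of_apply_le (max B 2)).subset fun c hc ↦ ?_
  obtain ⟨θ, hθ, θ', hθ', -, rfl, -⟩ := id hc
  obtain ⟨hi, -, hw⟩ := (mem_pisotGen_iff K).mp hθ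
  obtain ⟨hi', -, hw'⟩ := (mem_pisotGen_iff K).mp hθ'
  refine ⟨hi'.sub hi, fun w ↦ ?_⟩
  rcases eq_or_ne w (iotaPlace K) with rfl | hne
  · rw [iotaPlace_apply, abs_of_pos (pos_of_mem_CK K hc)]
    exact le_max_of_le_left (hB _ hc)
  · have : w (θ' - θ) ≤ w θ' + w θ := w.1.sub_le_add θ' θ
    exact le_max_of_le_right (by linarith [hw w hne, hw' w hne])

lemma exists_mem_CK_forall_re_neg_iff {ω : InfinitePlace K → ℂ} (hω : ∀ w, ‖ω w‖ = 1)
    (hω_real : ∀ w, w.IsReal → ω w = 1)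
    (hω_CK : ∀ w, ∀ c ∈ CK K, (conj (ω w) * w.embedding c).re ≠ 0) (P : Set (InfinitePlace K)) :
    ∃ c ∈ CK K, ∀ w ≠ iotaPlace K, (conj (ω w) * w.embedding c).re < 0 ↔ w ∈ P := by
  classical
  have hsep : ∀ᶠ ρ in 𝓝 (0 : ℝ), ∀ w, ∀ c ∈ CK K, 3 * ρ < |(conj (ω w) * w.embedding c).re| :=
    eventually_all.mpr fun w ↦ (eventually_all_finite (finite_CK K)).mpr fun c hc ↦
      ((continuous_const.mul continuous_id).tendsto' 0 0 (mul_zero 3)).eventually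
        (gt_mem_nhds (abs_pos.mpr (hω_CK w c hc)))
  obtain ⟨ρ, ⟨hρ_sep, hρ_half⟩, hρ⟩ := (((hsep.and (gt_mem_nhds one_half_pos)).filter_mono
    nhdsWithin_le_nhds).and (self_mem_nhdsWithin : Set.Ioi (0 : ℝ) ∈ 𝓝[>] 0)).exists
  obtain ⟨D, hD⟩ := exists_mem_pisotGen_near K hρ
  let r : InfinitePlace K → ℝ := fun w ↦ if w ∈ P then 1 - 2 * ρ else -(1 - 2 * ρ)
  have hr : ∀ w, ‖(r w * ω w : ℂ)‖ = 1 - 2 * ρ := fun w ↦ by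
    rw [norm_mul, Complex.norm_real, hω, mul_one, Real.norm_eq_abs]
    dsimp only [r]
    rw [apply_ite abs, abs_neg, ite_self]
    exact abs_of_nonneg (by linarith)
  obtain ⟨θ, hθ, happrox, -⟩ := hD (fun w ↦ r w * ω w) (D + 2)
    (fun w hw ↦ by simp [hω_real w hw]) (fun w _ ↦ by rw [hr]; linarith) (by linarith)
  obtain ⟨θ', hθ', hc⟩ := exists_sub_mem_CK K hθ
  refine ⟨θ' - θ, hc, fun w hw ↦ ?_⟩
  have hL : ∀ v, |(conj (ω w) * v).re| ≤ ‖v‖ := fun v ↦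
    (Complex.abs_re_le_norm _).trans (by rw [norm_mul, Complex.norm_conj, hω, one_mul])
  have hLr : (conj (ω w) * (r w * ω w)).re = r w := by
    rw [mul_left_comm, Complex.conj_mul', hω]
    simp
  have hc_sep := hρ_sep w _ hc
  rw [map_sub, mul_sub, Complex.sub_re] at hc_sep ⊢
  refine sub_neg_iff_of_abs_sub_le ((hL _).trans_lt ?_) ?_ hc_sep
  · rw [norm_embedding_eq]
    exact ((mem_pisotGen_iff K).mp hθ').2.2 w hw
  · change |_ - r w| ≤ ρ
    rw [← hLr, ← Complex.sub_re, ← mul_sub]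
    exact (hL _).trans (happrox w hw)

end

/-- **Corollary 3.** `C_K` has at least `2^(s+t-1)` elements, where `s` (resp. `2t`) is the
number of real (resp. non-real) embeddings of `K`; here `s + t` is the number of infinite
places of `K`. -/
theorem card_CK_ge (K : IntermediateField ℚ ℝ) [NumberField ↥K] :
    (2 ^ (Fintype.card (NumberField.InfinitePlace ↥K) - 1) : ℕ∞) ≤ (CK K).encard := by
  choose ω hω hω_real hω_CK using fun w : InfinitePlace K ↦
    w.exists_norm_eq_one_forall_re_conj_mul_embedding_ne_zero (finite_CK K)
      fun h ↦ (pos_of_mem_CK K h).ne' rfl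
  let signs : K → Set {w : InfinitePlace K // w ≠ iotaPlace K} :=
    fun c ↦ {w | (conj (ω w) * w.1.embedding c).re < 0}
  have hsurj : signs '' CK K = Set.univ := Set.eq_univ_of_forall fun P ↦ by
    obtain ⟨c, hc, hP⟩ := exists_mem_CK_forall_re_neg_iff K hω hω_real hω_CK (Subtype.val '' P)
    exact ⟨c, hc, Set.ext fun w ↦ (hP w w.2).trans Subtype.val_injective.mem_set_image⟩
  calc (2 ^ (Fintype.card (InfinitePlace K) - 1) : ℕ∞)
      = (Set.univ : Set (Set {w : InfinitePlace K // w ≠ iotaPlace K})).encard := by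
        rw [Set.encard_univ_set_subtype_ne]
    _ = (signs '' CK K).encard := by rw [hsurj]
    _ ≤ (CK K).encard := Set.encard_image_le _ _
end
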